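/- arXiv:1409.5953 — 4 statements merged into one kernel-verified Lean document; each statement's English description precedes it below -/
import Mathlib

section
/- Let G be a group, g ∈ G an element of infinite order (¬ IsOfFinOrder g) such that the cyclic subgroup N = Subgroup.zpowers g is normal in G. Let n ≥ 1 and let w ∈ FreeGroup (Fin n) be an E-type iterated identity of G such that the quotient group G/N has iterational depth at most D with respect to w. Then G has iterational depth at most 2D+1 with respect to w. -/
noncomputable section

/-- The verbal map: evaluate `w` with the variable of index `0` set to `x`
and the variable of index `i` set to `f i` for `i ≠ 0`. -/
def verbalMap {n : ℕ} [NeZero n] {G : Type*} [Group G] (w : FreeGroup (Fin n))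
    (f : Fin n → G) : G → G :=
  fun x => FreeGroup.lift (Function.update f 0 x) w

/-- `w` is an E-type (Engel type) iterated identity of `G`. -/
def IsEIteratedIdentity {n : ℕ} [NeZero n] (w : FreeGroup (Fin n)) (G : Type*) [Group G] : Prop :=
  ∀ f : Fin n → G, ∃ d : ℕ, 1 ≤ d ∧ (verbalMap w f)^[d] (f 0) = 1

/-- `G` has iterational depth at most `D` with respect to `w`. -/
def DepthAtMost {n : ℕ} [NeZero n] (w : FreeGroup (Fin n)) (G : Type*) [Group G] (D : ℕ) : Prop :=
  ∀ f : Fin n → G, ∃ d : ℕ, 1 ≤ d ∧ d ≤ D ∧ (verbalMap w f)^[d] (f 0) = 1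

/-!
Write `φ` for the verbal map and `N = ⟨g⟩ ≅ ℤ`. As `N` is abelian and normal, an induction on `w`
gives `φ (b * g ^ a) = φ b * g ^ (t * a)` for some `t : ℤ` depending on `b`; hence whenever
`φ^[k] 1 ∈ N`, the iterate `φ^[k]` acts on `N` as an affine map `a ↦ c + s * a` of exponents.
By the depth bound in `G/N`, the orbit of `f 0` enters `N` within `D` steps, and the identity of
`G/N` has some period `p ≤ D` under the induced map. The E-type hypothesis makes every return
time to `1` from a point of `N` a multiple of `p`, so for `k = p` the affine map has `0` as a
periodic point and eventually sends the exponent of our point to `0`. An affine self-map of `ℤ`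
having `0` as a periodic point is either linear `a ↦ s * a` or an involution `a ↦ c - a`, so a
point that eventually reaches `0` does so after at most one step, i.e. the orbit of `f 0` reaches
`1` within `D + p ≤ 2 * D` steps.
-/

open Function Subgroup

section VerbalMap

variable {n : ℕ} [NeZero n] {G H : Type*} [Group G] [Group H]

lemma verbalMap_update_zero (w : FreeGroup (Fin n)) (f : Fin n → G) (y : G) :
    verbalMap w (update f 0 y) = verbalMap w f := by
  funext x
  simp only [verbalMap, update_idem]

@[simp]
lemma verbalMap_one (f : Fin n → G) (x : G) : verbalMap 1 f x = 1 :=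
  map_one _

@[simp]
lemma verbalMap_of (i : Fin n) (f : Fin n → G) (x : G) :
    verbalMap (FreeGroup.of i) f x = update f 0 x i :=
  FreeGroup.lift_apply_of

@[simp]
lemma verbalMap_mul (u v : FreeGroup (Fin n)) (f : Fin n → G) (x : G) :
    verbalMap (u * v) f x = verbalMap u f x * verbalMap v f x :=
  map_mul _ u v

@[simp]
lemma verbalMap_inv (u : FreeGroup (Fin n)) (f : Fin n → G) (x : G) :
    verbalMap u⁻¹ f x = (verbalMap u f x)⁻¹ :=
  map_inv _ u

lemma semiconj_verbalMap (σ : G →* H) (w : FreeGroup (Fin n)) (f : Fin n → G) :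
    Semiconj σ (verbalMap w f) (verbalMap w (σ ∘ f)) := fun x => by
  simp only [verbalMap, ← comp_update]
  exact FreeGroup.lift_unique (σ.comp (FreeGroup.lift (update f 0 x))) fun i => by simp

lemma IsEIteratedIdentity.exists_iterate_eq_one {w : FreeGroup (Fin n)}
    (hw : IsEIteratedIdentity w G) (f : Fin n → G) (x : G) :
    ∃ d, 1 ≤ d ∧ (verbalMap w f)^[d] x = 1 := by
  simpa [verbalMap_update_zero] using hw (update f 0 x)

lemma DepthAtMost.exists_iterate_eq_one {w : FreeGroup (Fin n)} {D : ℕ}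
    (hD : DepthAtMost w G D) (f : Fin n → G) (x : G) :
    ∃ d, 1 ≤ d ∧ d ≤ D ∧ (verbalMap w f)^[d] x = 1 := by
  simpa [verbalMap_update_zero] using hD (update f 0 x)

end VerbalMap

lemma affine_iterate_apply (c s : ℤ) (j : ℕ) (a : ℤ) :
    (fun x => c + s * x)^[j] a = s ^ j * a + c * ∑ i ∈ Finset.range j, s ^ i := by
  induction j generalizing a with
  | zero => simp
  | succ j ih =>
    rw [iterate_succ_apply', ih, geom_sum_succ]
    ring

lemma eq_zero_or_affine_eq_zero_of_iterate_eq_zero {c s a : ℤ} {j q : ℕ} (hj : j ≠ 0)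
    (hq : q ≠ 0) (h0 : (fun x => c + s * x)^[j] 0 = 0)
    (ha : (fun x => c + s * x)^[q] a = 0) : a = 0 ∨ c + s * a = 0 := by
  rw [affine_iterate_apply, mul_zero, zero_add, mul_eq_zero] at h0
  rw [affine_iterate_apply] at ha
  rcases h0 with rfl | hsum
  · simp only [zero_mul, add_zero, mul_eq_zero, pow_eq_zero_iff hq] at ha
    rcases ha with rfl | rfl <;> simp
  · have hpow : s ^ j = 1 := by
      have := geom_sum_mul s j
      rw [hsum, zero_mul] at this
      omega
    rcases Int.isUnit_iff.mp (IsUnit.of_pow_eq_one hpow hj) with rfl | rfl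
    · simp [hj] at hsum
    · rw [neg_one_geom_sum] at ha
      rcases Nat.even_or_odd q with hq2 | hq2
      · rw [if_pos hq2, hq2.neg_one_pow] at ha
        left; linarith
      · rw [if_neg (Nat.not_even_iff_odd.mpr hq2), hq2.neg_one_pow] at ha
        right; linarith

section CyclicNormal

variable {n : ℕ} [NeZero n] {G : Type*} [Group G] (g : G) [(zpowers g).Normal]

lemma exists_zpow_mul_eq_mul_zpow (h : G) : ∃ ε : ℤ, ∀ a : ℤ, g ^ a * h = h * g ^ (ε * a) := by
  obtain ⟨ε, hε⟩ := mem_zpowers_iff.mp (Normal.conj_mem ‹_› g (mem_zpowers g) h⁻¹)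
  refine ⟨ε, fun a => ?_⟩
  rw [zpow_mul, hε, conj_zpow]
  group

lemma exists_verbalMap_mul_zpow (w : FreeGroup (Fin n)) (f : Fin n → G) (b : G) :
    ∃ t : ℤ, ∀ a : ℤ, verbalMap w f (b * g ^ a) = verbalMap w f b * g ^ (t * a) := by
  have hw : w ∈ closure (Set.range FreeGroup.of) := by simp [FreeGroup.closure_range_of]
  induction hw using Subgroup.closure_induction with
  | mem _ hi =>
    obtain ⟨i, rfl⟩ := hi
    rcases eq_or_ne i 0 with rfl | hi
    · exact ⟨1, fun a => by simp⟩
    · exact ⟨0, fun a => by simp [update_of_ne hi]⟩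
  | one => exact ⟨0, fun a => by simp⟩
  | mul u v _ _ hu hv =>
    obtain ⟨t, ht⟩ := hu
    obtain ⟨s, hs⟩ := hv
    obtain ⟨ε, hε⟩ := exists_zpow_mul_eq_mul_zpow g (verbalMap v f b)
    refine ⟨ε * t + s, fun a => ?_⟩
    rw [verbalMap_mul, verbalMap_mul, ht, hs, mul_assoc, ← mul_assoc (g ^ _), hε]
    group
  | inv u _ hu =>
    obtain ⟨t, ht⟩ := hu
    obtain ⟨ε, hε⟩ := exists_zpow_mul_eq_mul_zpow g (verbalMap u f b)⁻¹
    refine ⟨-(ε * t), fun a => ?_⟩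
    rw [verbalMap_inv, verbalMap_inv, ht, mul_inv_rev, ← zpow_neg, hε]
    group

lemma exists_iterate_verbalMap_mul_zpow (w : FreeGroup (Fin n)) (f : Fin n → G) (b : G)
    (k : ℕ) : ∃ s : ℤ, ∀ a : ℤ,
      (verbalMap w f)^[k] (b * g ^ a) = (verbalMap w f)^[k] b * g ^ (s * a) := by
  induction k with
  | zero => exact ⟨1, fun a => by simp⟩
  | succ k ih =>
    obtain ⟨s, hs⟩ := ih
    obtain ⟨t, ht⟩ := exists_verbalMap_mul_zpow g w f ((verbalMap w f)^[k] b)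
    refine ⟨t * s, fun a => ?_⟩
    rw [iterate_succ_apply', iterate_succ_apply', hs, ht, mul_assoc]

lemma exists_semiconj_zpow_affine (w : FreeGroup (Fin n)) (f : Fin n → G) {k : ℕ} {c : ℤ}
    (hc : (verbalMap w f)^[k] 1 = g ^ c) :
    ∃ s : ℤ, Semiconj (g ^ · : ℤ → G) (fun a => c + s * a) (verbalMap w f)^[k] := by
  obtain ⟨s, hs⟩ := exists_iterate_verbalMap_mul_zpow g w f 1 k
  refine ⟨s, fun a => ?_⟩
  simpa [hc, zpow_add] using (hs a).symm

lemma eq_one_or_iterate_minimalPeriod_eq_one (hg : ¬IsOfFinOrder g) {w : FreeGroup (Fin n)}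
    (hw : IsEIteratedIdentity w G) (f : Fin n → G) {x : G} (hx : x ∈ zpowers g) :
    x = 1 ∨ (verbalMap w f)^[minimalPeriod
      (verbalMap w (QuotientGroup.mk' (zpowers g) ∘ f)) 1] x = 1 := by
  set π := QuotientGroup.mk' (zpowers g)
  set φ := verbalMap w f
  set p := minimalPeriod (verbalMap w (π ∘ f)) 1
  have hπ := semiconj_verbalMap π w f
  have hdvd : ∀ y ∈ zpowers g, ∀ e, φ^[e] y = 1 → p ∣ e := fun y hy e he => by
    have hy1 : π y = 1 := (QuotientGroup.eq_one_iff y).mpr hy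
    refine IsPeriodicPt.minimalPeriod_dvd (?_ : _ = _)
    rw [← hy1, ← hπ.iterate_right, he, map_one, hy1]
  obtain ⟨e₀, he₀, h₀⟩ := hw.exists_iterate_eq_one f 1
  obtain ⟨e, he, hxe⟩ := hw.exists_iterate_eq_one f x
  obtain ⟨m₀, rfl⟩ := hdvd 1 (one_mem _) e₀ h₀
  obtain ⟨m, rfl⟩ := hdvd x hx _ hxe
  have hp : π (φ^[p] 1) = 1 := by
    rw [hπ.iterate_right, map_one]
    exact iterate_minimalPeriod
  obtain ⟨c, hc⟩ := mem_zpowers_iff.mp ((QuotientGroup.eq_one_iff _).mp hp)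
  obtain ⟨s, hs⟩ := exists_semiconj_zpow_affine g w f hc.symm
  have hφ : ∀ m b, φ^[p * m] (g ^ b) = g ^ ((fun x => c + s * x)^[m] b) := fun m b => by
    rw [iterate_mul]
    exact (hs.iterate_right m b).symm
  have hinj : ∀ {m b}, φ^[p * m] (g ^ b) = 1 → (fun x => c + s * x)^[m] b = 0 :=
    fun h => injective_zpow_iff_not_isOfFinOrder.mpr hg <|
      show g ^ _ = g ^ (0 : ℤ) by rw [← hφ, h, zpow_zero]
  obtain ⟨a, rfl⟩ := mem_zpowers_iff.mp hx
  rcases eq_zero_or_affine_eq_zero_of_iterate_eq_zero (j := m₀) (q := m)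
    (right_ne_zero_of_mul (Nat.one_le_iff_ne_zero.mp he₀))
    (right_ne_zero_of_mul (Nat.one_le_iff_ne_zero.mp he))
    (hinj (by rwa [zpow_zero])) (hinj hxe) with rfl | h
  · exact Or.inl (zpow_zero g)
  · right
    rw [← hs a]
    show g ^ (c + s * a) = 1
    rw [h, zpow_zero]

end CyclicNormal

/-- If `N = ⟨g⟩` is an infinite cyclic normal subgroup of `G` and `w` is an E-type iterated
identity of `G` whose iterational depth in `G/N` is at most `D`, then the iterational depth
of `w` in `G` is at most `2D + 1`. -/
theorem depth_of_infinite_cyclic_normal_subgroup (G : Type*) [Group G] (g : G)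
    (hg : ¬ IsOfFinOrder g) [hN : (Subgroup.zpowers g).Normal]
    (n : ℕ) [NeZero n] (w : FreeGroup (Fin n)) (D : ℕ)
    (hw : IsEIteratedIdentity w G)
    (hq : DepthAtMost w (G ⧸ Subgroup.zpowers g) D) :
    DepthAtMost w G (2 * D + 1) := by
  intro f
  set π := QuotientGroup.mk' (zpowers g)
  set p := minimalPeriod (verbalMap w (π ∘ f)) 1
  obtain ⟨d, hd, hdD, hd_one⟩ := hq (π ∘ f)
  have hp : p ≤ D := by
    obtain ⟨d', hd', hd'D, hd'_one⟩ := hq.exists_iterate_eq_one (π ∘ f) 1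
    exact (IsPeriodicPt.minimalPeriod_le hd' hd'_one).trans hd'D
  have hx : (verbalMap w f)^[d] (f 0) ∈ zpowers g := by
    rw [← QuotientGroup.eq_one_iff, ← QuotientGroup.mk'_apply,
      (semiconj_verbalMap π w f).iterate_right]
    exact hd_one
  rcases eq_one_or_iterate_minimalPeriod_eq_one g hg hw f hx with h | h
  · exact ⟨d, hd, by omega, h⟩
  · exact ⟨p + d, by omega, by omega, by rwa [iterate_add_apply]⟩
end
end

section
/- Let G and Q be groups and π : G →* Q a surjective group homomorphism. If n ≥ 1 and w ∈ FreeGroup (Fin n) is an E-type iterated identity of G, then w is an E-type iterated identity of Q. -/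
noncomputable section

theorem verbalMap_comm {n : ℕ} [NeZero n] {G Q : Type*} [Group G] [Group Q]
    (π : G →* Q) (w : FreeGroup (Fin n)) (g : Fin n → G) (x : G) :
    π (verbalMap w g x) = verbalMap w (π ∘ g) (π x) := by
  have h : Function.update (π ∘ g) 0 (π x) = π ∘ Function.update g 0 x := by
    funext i
    by_cases hi : i = 0 <;> simp [hi, Function.update]
  simp only [verbalMap, h]
  rw [show π (FreeGroup.lift (Function.update g 0 x) w)
      = (π.comp (FreeGroup.lift (Function.update g 0 x))) w from rfl]
  congr 1
  apply FreeGroup.ext_hom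
  intro i
  simp

/-- Every quotient of a group satisfying an E-type iterated identity `w` satisfies `w`. -/
theorem isEIteratedIdentity_quotient (G Q : Type*) [Group G] [Group Q]
    (π : G →* Q) (hπ : Function.Surjective π) (n : ℕ) [NeZero n]
    (w : FreeGroup (Fin n)) (hw : IsEIteratedIdentity w G) :
    IsEIteratedIdentity w Q := by
  intro f
  choose g hg using fun i => hπ (f i)
  have hfg : f = π ∘ g := by funext i; simp [hg]
  obtain ⟨d, hd1, hd⟩ := hw g
  refine ⟨d, hd1, ?_⟩
  have key : ∀ k, (verbalMap w f)^[k] (f 0) = π ((verbalMap w g)^[k] (g 0)) := by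
    intro k
    induction k with
    | zero => simp [hg]
    | succ k ih =>
      rw [Function.iterate_succ_apply', Function.iterate_succ_apply', ih,
        verbalMap_comm π w g, hfg]
  rw [key, hd, map_one]
end
end

section
/- Let n ≥ 1 and let w ∈ FreeGroup (Fin n) with w ≠ 1. Let σ : FreeGroup (Fin n) →* FreeGroup (Fin n) be the substitution endomorphism determined by σ(x₀) = w and σ(x_i) = x_i for i ≠ 0 (i.e., σ = FreeGroup.lift (Function.update FreeGroup.of 0 w)). Then for every k ≥ 1, the k-fold iterate satisfies σ^[k] (FreeGroup.of 0) ≠ 1. (Equivalently: every Engel iteration of a word that is not freely trivial is not freely trivial.) -/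
/-!
If `σ` is injective, so are its iterates, and `σ^[k] x₀ = 1` would force `x₀ = 1`.
Otherwise the image `A = σ(Fₙ)`, free by Nielsen–Schreier, has rank `< n`, because free groups
of finite rank are Hopfian. Let `π : Fₙ → Fₙ₋₁` kill `x₀`. Since `σ` fixes the other generators,
`π ∘ σ^[k-1]` maps `A` onto `Fₙ₋₁`, and it kills `w = σ x₀ ∈ A` because `σ^[k] x₀ = 1`.
A surjection from a free group of rank `≤ n - 1` onto `Fₙ₋₁` is again injective by
Hopficity, so `w = 1`.
-/

open Function

theorem Finset.exists_perm_apply_eq_mul {G : Type*} [Group G] (S : Finset G) (g : G) :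
    ∃ π : Equiv.Perm S, ∀ (s : S) (h : g * s ∈ S), π s = ⟨g * s, h⟩ := by
  classical
  let f : {s : S // g * s ∈ S} → S := fun s => ⟨g * s.1, s.2⟩
  have hf : Injective f := fun s t h =>
    Subtype.ext <| Subtype.ext <| mul_left_cancel (congrArg Subtype.val h)
  exact ⟨(Equiv.ofInjective f hf).extendSubtype, fun s h => Equiv.extendSubtype_apply_of_mem _ s h⟩

theorem Group.FG.finite_monoidHom (G Q : Type*) [Group G] [Group.FG G] [Group Q] [Finite Q] :
    Finite (G →* Q) := by
  obtain ⟨α, _, φ, hφ⟩ := Group.fg_iff_exists_freeGroup_hom_surjective_finite.mp ‹_›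
  exact .of_injective (fun f => FreeGroup.lift.symm (f.comp φ))
    fun f f' h => (MonoidHom.cancel_right hφ).mp (FreeGroup.lift.symm.injective h)

/-- Precomposition with `f` is injective on the finite set `Hom(G, G ⧸ H)`, hence surjective, so
every homomorphism to a finite quotient factors through `f` and vanishes on `ker f`. -/
theorem MonoidHom.injective_of_surjective_of_residuallyFinite {G : Type*} [Group G] [Group.FG G]
    [Group.ResiduallyFinite G] {f : G →* G} (hf : Surjective f) : Injective f := by
  refine (injective_iff_map_eq_one f).mpr fun g hg => by_contra fun hne => ?_
  obtain ⟨H, hgH⟩ := Group.exists_finiteIndexNormalSubgroup_notMem g hne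
  have := Group.FG.finite_monoidHom G (G ⧸ H.toSubgroup)
  have hcomp : Injective fun χ : G →* G ⧸ H.toSubgroup => χ.comp f := fun _ _ h =>
    (MonoidHom.cancel_right hf).mp h
  obtain ⟨χ, hχ⟩ := Finite.injective_iff_surjective.mp hcomp (QuotientGroup.mk' H.toSubgroup)
  have hqg : QuotientGroup.mk' H.toSubgroup g = 1 := by simp [← hχ, hg]
  exact hgH (FiniteIndexNormalSubgroup.mem_toSubgroup_iff.mp ((QuotientGroup.eq_one_iff g).mp hqg))

universe u

namespace FreeGroup

theorem mk_cons_true {α : Type*} (i : α) (t : List (α × Bool)) :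
    mk ((i, true) :: t) = of i * mk t := by
  rw [of, mul_mk]; rfl

theorem mk_cons_false {α : Type*} (i : α) (t : List (α × Bool)) :
    mk ((i, false) :: t) = (of i)⁻¹ * mk t := by
  rw [of, inv_mk, mul_mk]; rfl

/-- The generators act on the finite set `S` of suffixes of the word of `v` by partial left
translations; extending these to permutations of `S`, `v` moves `1` to `v`. -/
theorem exists_finite_monoidHom_ne_one {α : Type u} {v : FreeGroup α} (hv : v ≠ 1) :
    ∃ (Q : Type u) (_ : Group Q) (_ : Finite Q) (f : FreeGroup α →* Q), f v ≠ 1 := by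
  classical
  set L := v.toWord
  let S : Finset (FreeGroup α) := (L.tails.map mk).toFinset
  have mem_S : ∀ t, t <:+ L → mk t ∈ S := fun t ht => by
    simpa [S] using ⟨t, ht, rfl⟩
  choose π hπ using fun i => S.exists_perm_apply_eq_mul (of i)
  let f : FreeGroup α →* Equiv.Perm S := lift π
  let one : S := ⟨1, mem_S [] L.nil_suffix⟩
  have f_mk_one : ∀ t, t <:+ L → (f (mk t) one : FreeGroup α) = mk t := by
    intro t
    induction t with
    | nil => intro _; rfl
    | cons a t ih =>
      intro ht
      have ht' : t <:+ L := (List.suffix_cons a t).trans ht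
      have hx := ih ht'
      have hy := mem_S _ ht
      obtain ⟨i, _ | _⟩ := a
      · rw [mk_cons_false] at hy ⊢
        have hmem : of i * ((of i)⁻¹ * mk t) ∈ S := by simpa using mem_S t ht'
        have hstep : (π i)⁻¹ (f (mk t) one) = ⟨_, hy⟩ := by
          rw [Equiv.Perm.inv_eq_iff_eq, hπ i _ hmem]
          ext
          simp [hx]
        rw [_root_.map_mul, Equiv.Perm.mul_apply, _root_.map_inv, lift_apply_of, hstep]
      · rw [mk_cons_true] at hy ⊢
        rw [_root_.map_mul, Equiv.Perm.mul_apply, lift_apply_of, hπ i _ (by rwa [hx])]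
        simp only [hx]
  refine ⟨Equiv.Perm S, inferInstance, inferInstance, f, fun h => hv ?_⟩
  simpa [h, one, L, mk_toWord] using (f_mk_one L List.suffix_rfl).symm

instance residuallyFinite (α : Type u) : Group.ResiduallyFinite (FreeGroup α) :=
  Group.residuallyFinite_of_forall_exists_finite_monoidHom fun _ => exists_finite_monoidHom_ne_one

theorem surjective_of_of_mem_range {G α : Type*} [Group G] {f : G →* FreeGroup α}
    (h : ∀ a, of a ∈ f.range) : Surjective f := by
  rw [← MonoidHom.range_eq_top, eq_top_iff, ← closure_range_of, Subgroup.closure_le]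
  rintro _ ⟨a, rfl⟩
  exact h a

end FreeGroup

namespace FreeGroupBasis

variable {ι κ G H : Type*} [Group G] [Group H]

/-- Homomorphisms to `ℤˣ` are `2 ^ rank` many, and a surjection `G → H` embeds those on `H` into
those on `G`. -/
theorem finite_and_card_le_of_surjective [Finite ι] (b : FreeGroupBasis ι G)
    (c : FreeGroupBasis κ H) {f : G →* H} (hf : Surjective f) :
    Finite κ ∧ Nat.card κ ≤ Nat.card ι := by
  classical
  have hinj : Injective fun g : κ → ℤˣ => b.lift.symm ((c.lift g).comp f) := fun g g' h =>
    c.lift.injective ((MonoidHom.cancel_right hf).mp (b.lift.symm.injective h))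
  have : Finite (κ → ℤˣ) := .of_injective _ hinj
  have : Finite κ := .of_injective (fun k j => if j = k then (-1 : ℤˣ) else 1) fun k k' h => by
    simpa using congrFun h k
  refine ⟨this, (Nat.pow_le_pow_iff_right one_lt_two).mp ?_⟩
  simpa [Nat.card_fun] using Nat.card_le_card_of_injective _ hinj

theorem injective_of_surjective [Finite ι] (b : FreeGroupBasis ι G) (c : FreeGroupBasis κ H)
    (hcard : Nat.card ι ≤ Nat.card κ) {f : G →* H} (hf : Surjective f) : Injective f := by
  obtain ⟨_, hle⟩ := b.finite_and_card_le_of_surjective c hf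
  obtain ⟨e⟩ := Finite.card_eq.mp (hle.antisymm hcard)
  let φ : FreeGroup ι →* FreeGroup ι :=
    ((FreeGroup.freeGroupCongr e).toMonoidHom.comp c.repr.toMonoidHom).comp
      (f.comp b.repr.symm.toMonoidHom)
  have hφ : Injective φ := MonoidHom.injective_of_surjective_of_residuallyFinite <|
    (FreeGroup.freeGroupCongr e).surjective.comp <| c.repr.surjective.comp <|
      hf.comp b.repr.symm.surjective
  intro x y hxy
  simpa using hφ (show φ (b.repr x) = φ (b.repr y) by simp [φ, hxy])

end FreeGroupBasis

theorem FreeGroup.card_generators_range_lt {ι : Type*} [Finite ι]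
    {σ : FreeGroup ι →* FreeGroup ι} (hσ : ¬Injective σ) :
    Finite (IsFreeGroup.Generators σ.range) ∧
      Nat.card (IsFreeGroup.Generators σ.range) < Nat.card ι := by
  obtain ⟨hfin, hle⟩ := (FreeGroupBasis.ofFreeGroup ι).finite_and_card_le_of_surjective
    (IsFreeGroup.basis σ.range) σ.rangeRestrict_surjective
  refine ⟨hfin, hle.lt_of_ne fun h => hσ (σ.rangeRestrict_injective_iff.mp ?_)⟩
  exact (FreeGroupBasis.ofFreeGroup ι).injective_of_surjective (IsFreeGroup.basis σ.range)
    h.ge σ.rangeRestrict_surjective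

open FreeGroup in
/-- If a word `w` is not freely trivial, then none of its Engel iterations (obtained by
repeatedly substituting `w` for the variable `x₀`) is freely trivial. -/
theorem engel_iteration_ne_one (n : ℕ) [NeZero n] (w : FreeGroup (Fin n)) (hw : w ≠ 1)
    (k : ℕ) (hk : 1 ≤ k) :
    (⇑(FreeGroup.lift (Function.update FreeGroup.of (0 : Fin n) w) :
        FreeGroup (Fin n) →* FreeGroup (Fin n)))^[k] (FreeGroup.of 0) ≠ 1 := by
  -- `σ` lives in `Monoid.End` so that `σ ^ (k - 1)` below is again a homomorphism.
  let σ : Monoid.End (FreeGroup (Fin n)) := lift (update of 0 w)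
  change (⇑σ)^[k] (of 0) ≠ 1
  intro hσk
  by_cases hσ : Injective σ
  · exact of_ne_one _ (hσ.iterate k (hσk.trans (iterate_map_one σ k).symm))
  obtain ⟨_, hA⟩ := card_generators_range_lt hσ
  have hcard : Nat.card {i : Fin n // i ≠ 0} = n - 1 := by simp
  rw [Nat.card_eq_fintype_card (α := Fin n), Fintype.card_fin] at hA
  let π : FreeGroup (Fin n) →* FreeGroup {i : Fin n // i ≠ 0} :=
    lift fun i => if h : i = 0 then 1 else of ⟨i, h⟩
  let τ : MonoidHom.range σ →* FreeGroup {i : Fin n // i ≠ 0} :=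
    (π.comp (σ ^ (k - 1))).comp (MonoidHom.range σ).subtype
  have hτσ (x) : τ (MonoidHom.rangeRestrict σ x) = π (σ^[k] x) := by
    change π ((σ ^ (k - 1)) (σ x)) = _
    rw [Monoid.End.coe_pow, ← iterate_succ_apply, Nat.succ_eq_add_one, Nat.sub_add_cancel hk]
  have hσ_of (i) (hi : i ≠ 0) : σ (of i) = of i := lift_apply_of.trans (update_of_ne hi _ _)
  have hτ : Surjective τ := surjective_of_of_mem_range fun ⟨i, hi⟩ =>
    ⟨_, (hτσ (of i)).trans <| by rw [iterate_fixed (hσ_of i hi), lift_apply_of, dif_neg hi]⟩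
  have hτ_inj : Injective τ := (IsFreeGroup.basis _).injective_of_surjective
    (FreeGroupBasis.ofFreeGroup _) (by omega) hτ
  have hσ0 : σ (of 0) = w := lift_apply_of.trans (update_self _ _ _)
  have hτw : τ (MonoidHom.rangeRestrict σ (of 0)) = τ 1 := by
    rw [hτσ, hσk, π.map_one, τ.map_one]
  exact hw (hσ0.symm.trans (congrArg Subtype.val (hτ_inj hτw)))
end

section
/- Let G be a group, n ≥ 1, w ∈ FreeGroup (Fin n) with w ≠ 1, and D ≥ 1 such that G has iterational depth at most D with respect to w. Then G satisfies a non-trivial identity: there exist m ≥ 1 and v ∈ FreeGroup (Fin m) with v ≠ 1 such that FreeGroup.lift f v = 1 for every f : Fin m → G. -/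
noncomputable section

/-!
Let `σ_w` be the endomorphism of the free group substituting `w` for the generator `x₀`; the
iterates of the verbal map are evaluations of the words `W_d = σ_w^d(x₀)`, and the whole point is
that `W_d ≠ 1`. If `w` does not involve `x₀` then `W_d = w`. Otherwise the reduced word of `w` is
`p m q` with `p`, `q` free of `x₀` and `m` beginning and ending with `x₀^{±1}`, so `σ_w` is `σ_m`
after the automorphism `x₀ ↦ p x₀ q`. Writing the image of `x₀^{±1}` under `σ_m` as `c r c⁻¹` with
`r` cyclically reduced, no cancellation in `σ_m(u)` reaches the initial block `c r` (or the first
letter, if it is not `x₀^{±1}`) of the image of the first letter of `u`, so `σ_m` is injective.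

Bounded depth says that at every point of `G` one of `W_1, …, W_D` vanishes. For a letter `t`
occurring in neither `a` nor `b`, the commutator `⁅t a t⁻¹, b⁆` is nontrivial when `a` and `b` are
(its reduced word is visible, the letters `t^{±1}` separating the blocks), and it vanishes wherever
`a` or `b` does; nesting such commutators turns the `D` words into one nontrivial identity.
-/

namespace FreeGroup

open reduceCyclically
open scoped commutatorElement

variable {α β : Type*}

theorem head?_invRev (L : List (α × Bool)) :
    (invRev L).head? = L.getLast?.map fun a => (a.1, !a.2) := by
  simp [invRev, List.getLast?_map]

theorem getLast?_invRev (L : List (α × Bool)) :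
    (invRev L).getLast? = L.head?.map fun a => (a.1, !a.2) := by
  simp [invRev, List.head?_map]

theorem mk_append_invRev_mul_mk (A B C : List (α × Bool)) :
    mk (A ++ invRev B) * mk (B ++ C) = mk (A ++ C) := by
  simp only [← mul_mk, ← inv_mk]
  group

theorem mk_singleton_true (a : α) : mk [(a, true)] = of a := rfl

theorem mk_singleton_false (a : α) : mk [(a, false)] = (of a)⁻¹ := by
  rw [of, inv_mk]; rfl

theorem lift_map {G : Type*} [Group G] (f : β → G) (e : α → β) (x : FreeGroup α) :
    lift f (map e x) = lift (f ∘ e) x := by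
  induction x using FreeGroup.induction_on <;> simp_all

def FlankedBy (z : α) (L : List (α × Bool)) : Prop :=
  (∀ x ∈ L.head?, x.1 = z) ∧ ∀ x ∈ L.getLast?, x.1 = z

theorem FlankedBy.invRev {z : α} {L : List (α × Bool)} (h : FlankedBy z L) :
    FlankedBy z (invRev L) := by
  constructor <;> intro x hx <;>
    simp only [head?_invRev, getLast?_invRev, Option.mem_def, Option.map_eq_some_iff] at hx <;>
    obtain ⟨y, hy, rfl⟩ := hx
  exacts [h.2 y hy, h.1 y hy]

def freshCommutator (a b : FreeGroup α) : FreeGroup (Option α) :=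
  ⁅of none * map some a * (of none)⁻¹, map some b⁆

theorem lift_freshCommutator {G : Type*} [Group G] (f : Option α → G) (a b : FreeGroup α) :
    lift f (freshCommutator a b) =
      ⁅f none * lift (f ∘ some) a * (f none)⁻¹, lift (f ∘ some) b⁆ := by
  simp [freshCommutator, map_commutatorElement, lift_map]

variable [DecidableEq α]

theorem toWord_eq_of_isReduced {L : List (α × Bool)} {x : FreeGroup α} (hL : IsReduced L)
    (hx : mk L = x) : x.toWord = L := by
  rw [← hx, toWord_mk, hL.reduce_eq]

theorem toWord_map [DecidableEq β] {e : α → β} (he : Function.Injective e) (x : FreeGroup α) :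
    (map e x).toWord = x.toWord.map fun l => (e l.1, l.2) :=
  toWord_eq_of_isReduced
    ((List.isChain_map _).mpr (isReduced_toWord.imp fun _ _ h hab => h (he hab)))
    (by rw [← map.mk, mk_toWord])

def subst (z : α) (t : FreeGroup α) : FreeGroup α →* FreeGroup α :=
  lift (Function.update of z t)

variable {z : α} {t : FreeGroup α}

@[simp]
theorem subst_of_self : subst z t (of z) = t := by simp [subst]

@[simp]
theorem subst_of_of_ne {a : α} (ha : a ≠ z) : subst z t (of a) = of a := by
  simp [subst, Function.update_of_ne ha]

theorem subst_mk_of_forall_ne {L : List (α × Bool)} (hL : ∀ l ∈ L, l.1 ≠ z) :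
    subst z t (mk L) = mk L := by
  conv_rhs => rw [← lift_of_apply (mk L)]
  rw [subst, lift_mk, lift_mk]
  congr 1
  refine List.map_congr_left fun l hl => ?_
  rw [Function.update_of_ne (hL l hl)]

theorem subst_self : subst z (of z) = MonoidHom.id (FreeGroup α) := by
  ext a
  by_cases ha : a = z
  · subst ha; simp
  · simp [ha]

theorem subst_comp_subst {m p q : FreeGroup α} (hp : subst z m p = p) (hq : subst z m q = q) :
    (subst z m).comp (subst z (p * of z * q)) = subst z (p * m * q) := by
  ext a
  by_cases ha : a = z
  · subst ha; simp [hp, hq]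
  · simp [ha]

theorem injective_subst_mul_of_mul {p q : FreeGroup α} (hp : ∀ t, subst z t p = p)
    (hq : ∀ t, subst z t q = q) : Function.Injective (subst z (p * of z * q)) := by
  refine Function.LeftInverse.injective (g := subst z (p⁻¹ * of z * q⁻¹)) fun x => ?_
  rw [← MonoidHom.comp_apply, subst_comp_subst (hp _) (hq _)]
  simp [mul_assoc, subst_self]

theorem lift_comp_subst {G : Type*} [Group G] (f : α → G) (t : FreeGroup α) :
    (lift f).comp (subst z t) = lift (Function.update f z (lift f t)) := by
  ext a
  by_cases ha : a = z
  · subst ha; simp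
  · simp [ha]

theorem lift_subst_iterate {G : Type*} [Group G] (f : α → G) (w : FreeGroup α) (d : ℕ) :
    lift f ((subst z w)^[d] (of z)) = (fun x => lift (Function.update f z x) w)^[d] (f z) := by
  induction d generalizing f with
  | zero => simp
  | succ d ih =>
    rw [Function.iterate_succ_apply', ← MonoidHom.comp_apply, lift_comp_subst, ih,
      Function.iterate_succ_apply]
    simp only [Function.update_idem, Function.update_self, Function.update_eq_self]

section Flanked

variable (z) (m : FreeGroup α)

/-- For `l = z^{±1}` the reduced word of the image of `l` is `c ++ r ++ invRev c` with `r`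
cyclically reduced; `c ++ r` is the part of it that no later letter can cancel. -/
def leadingBlock (l : α × Bool) : List (α × Bool) :=
  if l.1 = z then
    conjugator (subst z m (mk [l])).toWord ++ reduceCyclically (subst z m (mk [l])).toWord
  else [l]

variable {z m}

theorem subst_mk_singleton_ne_one (hm : m ≠ 1) {l : α × Bool} (hl : l.1 = z) :
    subst z m (mk [l]) ≠ 1 := by
  obtain ⟨a, _ | _⟩ := l <;> subst hl
  · simpa [mk_singleton_false] using hm
  · simpa [mk_singleton_true] using hm

theorem flankedBy_toWord_subst_mk_singleton (hm : FlankedBy z m.toWord) {l : α × Bool}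
    (hl : l.1 = z) : FlankedBy z (subst z m (mk [l])).toWord := by
  obtain ⟨a, _ | _⟩ := l <;> subst hl
  · simpa [mk_singleton_false, toWord_inv] using hm.invRev
  · simpa [mk_singleton_true] using hm

theorem exists_toWord_subst_mk_singleton (hm : m ≠ 1) {l : α × Bool} (hl : l.1 = z) :
    ∃ C R, (subst z m (mk [l])).toWord = C ++ R ++ invRev C ∧ leadingBlock z m l = C ++ R ∧
      IsReduced (R ++ R) ∧ R ≠ [] := by
  set K := (subst z m (mk [l])).toWord with hK
  refine ⟨conjugator K, reduceCyclically K, (conj_conjugator_reduceCyclically K).symm,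
    by simp [leadingBlock, hl, hK], ?_, fun hR => subst_mk_singleton_ne_one hm hl ?_⟩
  · simpa using ((isCyclicallyReduced (L := K) isReduced_toWord).flatten_replicate 2).isReduced
  · rw [← mk_toWord (x := subst z m _), ← hK, ← conj_conjugator_reduceCyclically K, hR,
      List.append_nil, ← mul_mk, ← inv_mk, mul_inv_cancel]

theorem leadingBlock_ne_nil (hm : m ≠ 1) (l : α × Bool) : leadingBlock z m l ≠ [] := by
  by_cases hl : l.1 = z
  · obtain ⟨C, R, -, hB, -, hR⟩ := exists_toWord_subst_mk_singleton hm hl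
    simp [hB, hR]
  · simp [leadingBlock, hl]

theorem head?_leadingBlock_append (hm : m ≠ 1) (hm' : FlankedBy z m.toWord) {l : α × Bool}
    (hl : l.1 = z) (T : List (α × Bool)) : ∀ x ∈ (leadingBlock z m l ++ T).head?, x.1 = z := by
  obtain ⟨C, R, hK, hB, -, -⟩ := exists_toWord_subst_mk_singleton hm hl
  intro x hx
  refine (flankedBy_toWord_subst_mk_singleton hm' hl).1 x ?_
  rw [List.head?_append_of_ne_nil _ (leadingBlock_ne_nil hm l), hB] at hx
  rwa [hK, List.head?_append_of_ne_nil _ (hB ▸ leadingBlock_ne_nil hm l)]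

theorem exists_toWord_subst_mk_mul_of_fst_eq (hm : m ≠ 1) (hm' : FlankedBy z m.toWord)
    {l l' : α × Bool} (hl : l.1 = z) (hll' : l.1 = l'.1 → l.2 = l'.2) {y : FreeGroup α}
    {T' : List (α × Bool)} (hy : y.toWord = leadingBlock z m l' ++ T') :
    ∃ T, (subst z m (mk [l]) * y).toWord = leadingBlock z m l ++ T := by
  obtain ⟨C, R, hK, hB, hRR, hR⟩ := exists_toWord_subst_mk_singleton hm hl
  have hKred : IsReduced (C ++ R ++ invRev C) := hK ▸ isReduced_toWord
  have hYred : IsReduced (leadingBlock z m l' ++ T') := hy ▸ isReduced_toWord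
  rw [← mk_toWord (x := subst z m _), ← mk_toWord (x := y), hK, hy, hB]
  by_cases hl' : l'.1 = z
  · -- `l' = l`: the two images meet as `C R C⁻¹ · C R …`, and `R R` is reduced
    obtain rfl : l' = l := Prod.ext (hl'.trans hl.symm) (hll' (hl.trans hl'.symm)).symm
    rw [hB] at hYred
    refine ⟨R ++ T', toWord_eq_of_isReduced ?_ ?_⟩
    · rw [← List.append_assoc]
      refine IsReduced.append_overlap ?_ (hYred.infix ⟨C, [], by simp⟩) hR
      exact IsReduced.append_overlap (hKred.infix ⟨[], invRev C, rfl⟩) hRR hR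
    · rw [hB, List.append_assoc C R T', mk_append_invRev_mul_mk]
  · have hB' : leadingBlock z m l' = [l'] := by simp [leadingBlock, hl']
    rw [hB'] at hYred ⊢
    refine ⟨invRev C ++ l' :: T', toWord_eq_of_isReduced ?_ (by rw [mul_mk]; simp)⟩
    rw [← List.append_assoc]
    refine List.IsChain.append hKred hYred fun a ha b hb hab => absurd ?_ hl'
    rw [← hK] at ha
    rw [Option.mem_some_iff.mp hb, ← hab]
    exact (flankedBy_toWord_subst_mk_singleton hm' hl).2 a ha

theorem exists_toWord_subst_mk_mul (hm : m ≠ 1) (hm' : FlankedBy z m.toWord)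
    {l l' : α × Bool} (hll' : l.1 = l'.1 → l.2 = l'.2) {y : FreeGroup α}
    {T' : List (α × Bool)} (hy : y.toWord = leadingBlock z m l' ++ T') :
    ∃ T, (subst z m (mk [l]) * y).toWord = leadingBlock z m l ++ T := by
  by_cases hl : l.1 = z
  · exact exists_toWord_subst_mk_mul_of_fst_eq hm hm' hl hll' hy
  have hYred : IsReduced (leadingBlock z m l' ++ T') := hy ▸ isReduced_toWord
  refine ⟨leadingBlock z m l' ++ T', ?_⟩
  rw [subst_mk_of_forall_ne (by simpa using hl), ← mk_toWord (x := y), hy,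
    show leadingBlock z m l = [l] by simp [leadingBlock, hl]]
  refine toWord_eq_of_isReduced (List.isChain_cons.mpr ⟨fun b hb hlb => ?_, hYred⟩)
    (by rw [mul_mk])
  by_cases hl' : l'.1 = z
  · exact absurd (hlb.trans (head?_leadingBlock_append hm hm' hl' T' b hb)) hl
  · obtain rfl : l' = b := by simpa [leadingBlock, hl'] using hb
    exact hll' hlb

theorem exists_toWord_subst_mk_cons (hm : m ≠ 1) (hm' : FlankedBy z m.toWord) :
    ∀ (U : List (α × Bool)) (l : α × Bool), IsReduced (l :: U) →
      ∃ T, (subst z m (mk (l :: U))).toWord = leadingBlock z m l ++ T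
  | [], l, _ => by
    by_cases hl : l.1 = z
    · obtain ⟨C, R, hK, hB, -, -⟩ := exists_toWord_subst_mk_singleton hm hl
      exact ⟨invRev C, by rw [hK, hB]⟩
    · refine ⟨[], ?_⟩
      rw [subst_mk_of_forall_ne (by simpa using hl), toWord_eq_of_isReduced .singleton rfl]
      simp [leadingBlock, hl]
  | l' :: U, l, hred => by
    rw [isReduced_cons_cons] at hred
    obtain ⟨T', hT'⟩ := exists_toWord_subst_mk_cons hm hm' U l' hred.2
    rw [← List.singleton_append, ← mul_mk, _root_.map_mul]
    exact exists_toWord_subst_mk_mul hm hm' hred.1 hT'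

theorem subst_injective_of_flankedBy (hm : m ≠ 1) (hm' : FlankedBy z m.toWord) :
    Function.Injective (subst z m) := by
  refine (injective_iff_map_eq_one _).mpr fun u hu => ?_
  by_contra hne
  obtain ⟨l, U, hU⟩ := List.exists_cons_of_ne_nil (mt toWord_eq_nil_iff.mp hne)
  obtain ⟨T, hT⟩ := exists_toWord_subst_mk_cons hm hm' U l (hU ▸ isReduced_toWord)
  rw [← hU, mk_toWord, hu, toWord_one] at hT
  exact leadingBlock_ne_nil hm l (List.append_eq_nil_iff.mp hT.symm).1

end Flanked

theorem exists_eq_append_flankedBy {L : List (α × Bool)} (h : ∃ l ∈ L, l.1 = z) :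
    ∃ P M Q, L = P ++ M ++ Q ∧ (∀ l ∈ P, l.1 ≠ z) ∧ (∀ l ∈ Q, l.1 ≠ z) ∧ M ≠ [] ∧
      FlankedBy z M := by
  obtain ⟨a, ha⟩ := Option.isSome_iff_exists.mp
    (List.find?_isSome (p := fun l : α × Bool => l.1 = z) |>.mpr (by simpa using h))
  obtain ⟨haz, P, S, rfl, hP⟩ := List.find?_eq_some_iff_append.mp ha
  obtain ⟨b, hb⟩ := Option.isSome_iff_exists.mp
    (List.find?_isSome (xs := (a :: S).reverse) (p := fun l : α × Bool => l.1 = z)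
      |>.mpr ⟨a, by simp, haz⟩)
  obtain ⟨hbz, Q, M, hQM, hQ⟩ := List.find?_eq_some_iff_append.mp hb
  have hS : a :: S = M.reverse ++ [b] ++ Q.reverse := by
    simpa using congrArg List.reverse hQM
  have hhead : (M.reverse ++ [b]).head? = some a := by
    rw [← List.head?_append_of_ne_nil _ (by simp), ← hS, List.head?_cons]
  refine ⟨P, M.reverse ++ [b], Q.reverse, by simp [hS], by simpa using hP, by simpa using hQ,
    by simp, fun x hx => ?_, fun x hx => ?_⟩
  · obtain rfl : a = x := by simpa [hhead] using hx
    simpa using haz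
  · obtain rfl : b = x := by simpa using hx
    simpa using hbz

theorem subst_injective {w : FreeGroup α} (hw : ∃ l ∈ w.toWord, l.1 = z) :
    Function.Injective (subst z w) := by
  obtain ⟨P, M, Q, hPMQ, hP, hQ, hM, hM'⟩ := exists_eq_append_flankedBy hw
  have hMword : (mk M).toWord = M :=
    toWord_eq_of_isReduced (isReduced_toWord.infix ⟨P, Q, hPMQ.symm⟩) rfl
  have hfac : subst z w = (subst z (mk M)).comp (subst z (mk P * of z * mk Q)) := by
    rw [subst_comp_subst (subst_mk_of_forall_ne hP) (subst_mk_of_forall_ne hQ), mul_mk, mul_mk,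
      ← hPMQ, mk_toWord]
  rw [hfac, MonoidHom.coe_comp]
  refine .comp (subst_injective_of_flankedBy ?_ (by rwa [hMword]))
    (injective_subst_mul_of_mul (fun _ => subst_mk_of_forall_ne hP)
      fun _ => subst_mk_of_forall_ne hQ)
  rw [← toWord_injective.ne_iff, hMword, toWord_one]
  exact hM

theorem subst_iterate_ne_one {w : FreeGroup α} (hw : w ≠ 1) (d : ℕ) :
    (subst z w)^[d] (of z) ≠ 1 := by
  by_cases h : ∃ l ∈ w.toWord, l.1 = z
  · rw [← iterate_map_one (subst z w) d]
    exact ((subst_injective h).iterate d).ne (of_ne_one z)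
  · simp only [not_exists, not_and] at h
    have hfix : subst z w w = w := by
      rw [← mk_toWord (x := w), subst_mk_of_forall_ne h]
    cases d with
    | zero => exact of_ne_one z
    | succ d => rwa [Function.iterate_succ_apply, subst_of_self, Function.iterate_fixed hfix]

theorem toWord_mk_mul_map_some_mul (b : Bool) {x : FreeGroup α} (hx : x ≠ 1)
    {y : FreeGroup (Option α)} (hy : ∀ l ∈ y.toWord.head?, l.1 = none) :
    (mk [(none, b)] * map some x * y).toWord =
      (none, b) :: (x.toWord.map (fun l => (some l.1, l.2)) ++ y.toWord) := by
  have hX : (map some x).toWord ≠ [] := by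
    rw [Ne, toWord_eq_nil_iff, ← map_one (some : α → Option α)]
    exact (map_injective (Option.some_injective α)).ne hx
  have hsome : ∀ l ∈ (map some x).toWord, l.1 ≠ none := by
    simp only [toWord_map (Option.some_injective α), List.mem_map]
    rintro _ ⟨l, -, rfl⟩
    exact Option.some_ne_none l.1
  rw [← toWord_map (Option.some_injective α)]
  refine toWord_eq_of_isReduced (List.isChain_cons.mpr ⟨fun l hl h => ?_, ?_⟩) ?_
  · rw [List.head?_append_of_ne_nil _ hX] at hl
    exact absurd h.symm (hsome l (List.mem_of_mem_head? hl))
  · refine List.IsChain.append isReduced_toWord isReduced_toWord fun l hl l' hl' h => ?_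
    exact absurd (h.trans (hy l' hl')) (hsome l (List.mem_of_mem_getLast? hl))
  · rw [← List.singleton_append, ← mul_mk, ← mul_mk, mk_toWord, mk_toWord, mul_assoc]

theorem freshCommutator_ne_one {a b : FreeGroup α} (ha : a ≠ 1) (hb : b ≠ 1) :
    freshCommutator a b ≠ 1 := by
  have h : freshCommutator a b =
      mk [(none, true)] * map some a * (mk [(none, false)] * map some b *
        (mk [(none, true)] * map some a⁻¹ * (mk [(none, false)] * map some b⁻¹ * 1))) := by
    simp [freshCommutator, commutatorElement_def, mk_singleton_true, mk_singleton_false, mul_assoc]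
  have h₄ := toWord_mk_mul_map_some_mul false (inv_ne_one.mpr hb) (y := 1) (by simp)
  have h₃ := toWord_mk_mul_map_some_mul true (inv_ne_one.mpr ha) (by rw [h₄]; simp)
  have h₂ := toWord_mk_mul_map_some_mul false hb (by rw [h₃]; simp)
  rw [h, ← toWord_injective.ne_iff, toWord_mk_mul_map_some_mul true ha (by rw [h₂]; simp)]
  simp

end FreeGroup

open FreeGroup

section Laws

def HasNontrivialLaw (G : Type*) [Group G] : Prop :=
  ∃ m, 1 ≤ m ∧ ∃ v : FreeGroup (Fin m), v ≠ 1 ∧ ∀ f : Fin m → G, lift f v = 1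

variable {G : Type*} [Group G]

theorem hasNontrivialLaw_of_forall_lift_eq_one {α : Type*} [Fintype α] {v : FreeGroup α}
    (hv : v ≠ 1) (h : ∀ f : α → G, lift f v = 1) : HasNontrivialLaw G := by
  classical
  obtain ⟨l, -, -⟩ := List.exists_cons_of_ne_nil (mt toWord_eq_nil_iff.mp hv)
  refine ⟨Fintype.card α, Fintype.card_pos_iff.mpr ⟨l.1⟩, map (Fintype.equivFin α) v,
    fun h1 => hv (map_injective (Fintype.equivFin α).injective (by rw [h1, _root_.map_one])),
    fun f => by rw [lift_map]; exact h _⟩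

theorem hasNontrivialLaw_of_forall_exists {α : Type*} [Fintype α] :
    ∀ (us : List (FreeGroup α)), (∀ u ∈ us, u ≠ 1) → (∀ f : α → G, ∃ u ∈ us, lift f u = 1) →
      HasNontrivialLaw G
  | [], _, h => by simpa using h 1
  | [u], hu, h => hasNontrivialLaw_of_forall_lift_eq_one (hu u (by simp)) (by simpa using h)
  | a :: b :: us, hus, h => by
    classical
    refine hasNontrivialLaw_of_forall_exists ((b :: us).map (freshCommutator a)) ?_ fun f => ?_
    · simp only [List.mem_map]
      rintro _ ⟨c, hc, rfl⟩
      exact freshCommutator_ne_one (hus a (by simp)) (hus c (by simp [hc]))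
    · obtain ⟨u, hu, hfu⟩ := h (f ∘ some)
      rcases List.mem_cons.mp hu with rfl | hu
      · exact ⟨freshCommutator u b, List.mem_map_of_mem (by simp), by
          simp [lift_freshCommutator, hfu]⟩
      · exact ⟨freshCommutator a u, List.mem_map_of_mem hu, by simp [lift_freshCommutator, hfu]⟩
termination_by us => us.length

end Laws

theorem nontrivial_identity_of_bounded_depth_general (G : Type*) [Group G]
    (n : ℕ) [NeZero n] (w : FreeGroup (Fin n)) (hw : w ≠ 1)
    (D : ℕ) (h : DepthAtMost w G D) :
    ∃ m : ℕ, 1 ≤ m ∧ ∃ v : FreeGroup (Fin m), v ≠ 1 ∧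
      ∀ f : Fin m → G, FreeGroup.lift f v = 1 := by
  refine hasNontrivialLaw_of_forall_exists ((List.range' 1 D).map fun d => (subst 0 w)^[d] (of 0))
    ?_ fun f => ?_
  · simp only [List.mem_map]
    rintro _ ⟨d, -, rfl⟩
    exact subst_iterate_ne_one hw d
  · obtain ⟨d, hd1, hdD, hd⟩ := h f
    exact ⟨_, List.mem_map_of_mem (List.mem_range'_1.mpr ⟨hd1, by omega⟩),
      by rw [lift_subst_iterate]; exact hd⟩

/-- A group of finite iterational depth with respect to a non-trivial word satisfies a
non-trivial identity. -/
theorem nontrivial_identity_of_bounded_depth (G : Type*) [Group G]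
    (n : ℕ) [NeZero n] (w : FreeGroup (Fin n)) (hw : w ≠ 1)
    (D : ℕ) (hD : 1 ≤ D) (h : DepthAtMost w G D) :
    ∃ m : ℕ, 1 ≤ m ∧ ∃ v : FreeGroup (Fin m), v ≠ 1 ∧
      ∀ f : Fin m → G, FreeGroup.lift f v = 1 :=
  nontrivial_identity_of_bounded_depth_general G n w hw D h
end
end
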